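/- (Extremely tilted plane-wave equilibrium point.) For every γ ∈ (0,2), the point of the tilted Bianchi type VI_{-1/9} system given by Σ+ = −3/4, Σ− = √3/4, N = √3/4, A = 1/4, Σ12 = Σ13 = Σ23 = 0, λ = 0, Ω = 0, v1 = −2/3, v2 = √5/3, v3 = 0 (so that V = 1, extreme tilt) satisfies all five constraint equations (C1)–(C5) and is an equilibrium point: all twelve right-hand sides of the evolution equations vanish there. -/
import Mathlib


noncomputable section

namespace BianchiVI

/-- squared tilt speed `V² = v1² + v2² + v3²`. -/
def Vsq (v1 v2 v3 : ℝ) : ℝ := v1^2 + v2^2 + v3^2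

/-- `G₊ = 1 + (γ-1) V²`. -/
def Gp (γ v1 v2 v3 : ℝ) : ℝ := 1 + (γ - 1) * Vsq v1 v2 v3

/-- total shear `Σ²`. -/
def Sig2 (sp sm s12 s13 s23 : ℝ) : ℝ := sp^2 + sm^2 + s12^2 + s13^2 + s23^2

/-- deceleration parameter `q`. -/
def qdef (γ sp sm s12 s13 s23 Om v1 v2 v3 : ℝ) : ℝ :=
  2 * Sig2 sp sm s12 s13 s23
    + (1/2) * ((3*γ - 2) + (2 - γ) * Vsq v1 v2 v3) * Om / Gp γ v1 v2 v3

/-- `P = Σ_{ab} v^a v^b · V²`, so that `S = P/V²`. -/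
def Pdef (sp sm s12 s13 s23 v1 v2 v3 : ℝ) : ℝ :=
  -2*sp*v1^2 + (sp + Real.sqrt 3 * sm) * v2^2 + (sp - Real.sqrt 3 * sm) * v3^2
    + 2*Real.sqrt 3*(s12*v1*v2 + s13*v1*v3 + s23*v2*v3)

/-- `S = Σ_{ab} c^a c^b`. -/
def Sdef (sp sm s12 s13 s23 v1 v2 v3 : ℝ) : ℝ :=
  if 0 < Vsq v1 v2 v3 then Pdef sp sm s12 s13 s23 v1 v2 v3 / Vsq v1 v2 v3 else 0

/-- the quantity `T`. -/
def Tdef (γ sp sm s12 s13 s23 A v1 v2 v3 : ℝ) : ℝ :=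
  (((3*γ - 4) - 2*(γ-1)*A*v1) * (1 - Vsq v1 v2 v3)
      + (2 - γ) * Pdef sp sm s12 s13 s23 v1 v2 v3)
    / (1 - (γ - 1) * Vsq v1 v2 v3)

/-- right-hand side of the evolution equation. -/
def rhsSp (γ sp sm s12 s13 s23 N lam A Om v1 v2 v3 : ℝ) : ℝ :=
  (qdef γ sp sm s12 s13 s23 Om v1 v2 v3 - 2) * sp + 3*(s12^2 + s13^2) - 2*N^2 + (γ*Om/(2*(Gp γ v1 v2 v3))) * (-2*v1^2 + v2^2 + v3^2)

/-- right-hand side of the evolution equation. -/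
def rhsSm (γ sp sm s12 s13 s23 N lam A Om v1 v2 v3 : ℝ) : ℝ :=
  (qdef γ sp sm s12 s13 s23 Om v1 v2 v3 - 2 - 2*Real.sqrt 3*s23*lam) * sm + Real.sqrt 3*(s12^2 - s13^2) + 2*A*N + (Real.sqrt 3*γ*Om/(2*(Gp γ v1 v2 v3))) * (v2^2 - v3^2)

/-- right-hand side of the evolution equation. -/
def rhsS12 (γ sp sm s12 s13 s23 N lam A Om v1 v2 v3 : ℝ) : ℝ :=
  (qdef γ sp sm s12 s13 s23 Om v1 v2 v3 - 2 - 3*sp - Real.sqrt 3*sm) * s12 - Real.sqrt 3*(s23 + sm*lam)*s13 + (Real.sqrt 3*γ*Om/(Gp γ v1 v2 v3))*v1*v2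

/-- right-hand side of the evolution equation. -/
def rhsS13 (γ sp sm s12 s13 s23 N lam A Om v1 v2 v3 : ℝ) : ℝ :=
  (qdef γ sp sm s12 s13 s23 Om v1 v2 v3 - 2 - 3*sp + Real.sqrt 3*sm) * s13 - Real.sqrt 3*(s23 - sm*lam)*s12 + (Real.sqrt 3*γ*Om/(Gp γ v1 v2 v3))*v1*v3

/-- right-hand side of the evolution equation. -/
def rhsS23 (γ sp sm s12 s13 s23 N lam A Om v1 v2 v3 : ℝ) : ℝ :=
  (qdef γ sp sm s12 s13 s23 Om v1 v2 v3 - 2) * s23 - 2*Real.sqrt 3*N^2*lam + 2*Real.sqrt 3*lam*sm^2 + 2*Real.sqrt 3*s12*s13 + (Real.sqrt 3*γ*Om/(Gp γ v1 v2 v3))*v2*v3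

/-- right-hand side of the evolution equation. -/
def rhsN (γ sp sm s12 s13 s23 N lam A Om v1 v2 v3 : ℝ) : ℝ :=
  (qdef γ sp sm s12 s13 s23 Om v1 v2 v3 + 2*sp + 2*Real.sqrt 3*s23*lam) * N

/-- right-hand side of the evolution equation. -/
def rhsLam (γ sp sm s12 s13 s23 N lam A Om v1 v2 v3 : ℝ) : ℝ :=
  2*Real.sqrt 3*s23*(1 - lam^2)

/-- right-hand side of the evolution equation. -/
def rhsA (γ sp sm s12 s13 s23 N lam A Om v1 v2 v3 : ℝ) : ℝ :=
  (qdef γ sp sm s12 s13 s23 Om v1 v2 v3 + 2*sp) * A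

/-- right-hand side of the evolution equation. -/
def rhsOm (γ sp sm s12 s13 s23 N lam A Om v1 v2 v3 : ℝ) : ℝ :=
  (Om/(Gp γ v1 v2 v3)) * (2*(qdef γ sp sm s12 s13 s23 Om v1 v2 v3) - (3*γ-2) + 2*γ*A*v1 + (2*(qdef γ sp sm s12 s13 s23 Om v1 v2 v3)*(γ-1) - (2-γ)) * Vsq v1 v2 v3 - γ*(Pdef sp sm s12 s13 s23 v1 v2 v3))

/-- right-hand side of the evolution equation. -/
def rhsV1 (γ sp sm s12 s13 s23 N lam A Om v1 v2 v3 : ℝ) : ℝ :=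
  ((Tdef γ sp sm s12 s13 s23 A v1 v2 v3) + 2*sp)*v1 - 2*Real.sqrt 3*s13*v3 - 2*Real.sqrt 3*s12*v2 - A*(v2^2 + v3^2) - Real.sqrt 3*N*(v2^2 - v3^2)

/-- right-hand side of the evolution equation. -/
def rhsV2 (γ sp sm s12 s13 s23 N lam A Om v1 v2 v3 : ℝ) : ℝ :=
  ((Tdef γ sp sm s12 s13 s23 A v1 v2 v3) - sp - Real.sqrt 3*sm)*v2 - Real.sqrt 3*(s23 + sm*lam)*v3 + Real.sqrt 3*lam*N*v1*v3 + (A + Real.sqrt 3*N)*v1*v2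

/-- right-hand side of the evolution equation. -/
def rhsV3 (γ sp sm s12 s13 s23 N lam A Om v1 v2 v3 : ℝ) : ℝ :=
  ((Tdef γ sp sm s12 s13 s23 A v1 v2 v3) - sp + Real.sqrt 3*sm)*v3 - Real.sqrt 3*(s23 - sm*lam)*v2 - Real.sqrt 3*lam*N*v1*v2 + (A - Real.sqrt 3*N)*v1*v3

/-- the five constraint equations (C1)-(C5). -/
def SatisfiesConstraints (γ sp sm s12 s13 s23 N lam A Om v1 v2 v3 : ℝ) : Prop :=
  Sig2 sp sm s12 s13 s23 + A^2 + N^2 + Om = 1 ∧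
  2*sp*A + 2*sm*N + γ*Om*v1/(Gp γ v1 v2 v3) = 0 ∧
  -(s12*(N + Real.sqrt 3*A) + s13*lam*N) + γ*Om*v2/(Gp γ v1 v2 v3) = 0 ∧
  s13*(N - Real.sqrt 3*A) + s12*lam*N + γ*Om*v3/(Gp γ v1 v2 v3) = 0 ∧
  3*A^2 = (1 - lam^2)*N^2

/-- equilibrium point: all twelve right-hand sides vanish. -/
def IsEquilibrium (γ sp sm s12 s13 s23 N lam A Om v1 v2 v3 : ℝ) : Prop :=
  rhsSp γ sp sm s12 s13 s23 N lam A Om v1 v2 v3 = 0 ∧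
  rhsSm γ sp sm s12 s13 s23 N lam A Om v1 v2 v3 = 0 ∧
  rhsS12 γ sp sm s12 s13 s23 N lam A Om v1 v2 v3 = 0 ∧
  rhsS13 γ sp sm s12 s13 s23 N lam A Om v1 v2 v3 = 0 ∧
  rhsS23 γ sp sm s12 s13 s23 N lam A Om v1 v2 v3 = 0 ∧
  rhsN γ sp sm s12 s13 s23 N lam A Om v1 v2 v3 = 0 ∧
  rhsLam γ sp sm s12 s13 s23 N lam A Om v1 v2 v3 = 0 ∧
  rhsA γ sp sm s12 s13 s23 N lam A Om v1 v2 v3 = 0 ∧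
  rhsOm γ sp sm s12 s13 s23 N lam A Om v1 v2 v3 = 0 ∧
  rhsV1 γ sp sm s12 s13 s23 N lam A Om v1 v2 v3 = 0 ∧
  rhsV2 γ sp sm s12 s13 s23 N lam A Om v1 v2 v3 = 0 ∧
  rhsV3 γ sp sm s12 s13 s23 N lam A Om v1 v2 v3 = 0

/-- a solution of the tilted Bianchi type VI_(-1/9) system on the set `dom`:
the twelve evolution equations and the five constraints hold at every `τ ∈ dom`. -/
def IsSolutionOn (γ : ℝ) (dom : Set ℝ) (sp sm s12 s13 s23 N lam A Om v1 v2 v3 : ℝ → ℝ) : Prop :=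
  ∀ τ ∈ dom,
    (HasDerivAt sp (rhsSp γ (sp τ) (sm τ) (s12 τ) (s13 τ) (s23 τ) (N τ) (lam τ) (A τ) (Om τ) (v1 τ) (v2 τ) (v3 τ)) τ ∧
    HasDerivAt sm (rhsSm γ (sp τ) (sm τ) (s12 τ) (s13 τ) (s23 τ) (N τ) (lam τ) (A τ) (Om τ) (v1 τ) (v2 τ) (v3 τ)) τ ∧
    HasDerivAt s12 (rhsS12 γ (sp τ) (sm τ) (s12 τ) (s13 τ) (s23 τ) (N τ) (lam τ) (A τ) (Om τ) (v1 τ) (v2 τ) (v3 τ)) τ ∧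
    HasDerivAt s13 (rhsS13 γ (sp τ) (sm τ) (s12 τ) (s13 τ) (s23 τ) (N τ) (lam τ) (A τ) (Om τ) (v1 τ) (v2 τ) (v3 τ)) τ ∧
    HasDerivAt s23 (rhsS23 γ (sp τ) (sm τ) (s12 τ) (s13 τ) (s23 τ) (N τ) (lam τ) (A τ) (Om τ) (v1 τ) (v2 τ) (v3 τ)) τ ∧
    HasDerivAt N (rhsN γ (sp τ) (sm τ) (s12 τ) (s13 τ) (s23 τ) (N τ) (lam τ) (A τ) (Om τ) (v1 τ) (v2 τ) (v3 τ)) τ ∧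
    HasDerivAt lam (rhsLam γ (sp τ) (sm τ) (s12 τ) (s13 τ) (s23 τ) (N τ) (lam τ) (A τ) (Om τ) (v1 τ) (v2 τ) (v3 τ)) τ ∧
    HasDerivAt A (rhsA γ (sp τ) (sm τ) (s12 τ) (s13 τ) (s23 τ) (N τ) (lam τ) (A τ) (Om τ) (v1 τ) (v2 τ) (v3 τ)) τ ∧
    HasDerivAt Om (rhsOm γ (sp τ) (sm τ) (s12 τ) (s13 τ) (s23 τ) (N τ) (lam τ) (A τ) (Om τ) (v1 τ) (v2 τ) (v3 τ)) τ ∧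
    HasDerivAt v1 (rhsV1 γ (sp τ) (sm τ) (s12 τ) (s13 τ) (s23 τ) (N τ) (lam τ) (A τ) (Om τ) (v1 τ) (v2 τ) (v3 τ)) τ ∧
    HasDerivAt v2 (rhsV2 γ (sp τ) (sm τ) (s12 τ) (s13 τ) (s23 τ) (N τ) (lam τ) (A τ) (Om τ) (v1 τ) (v2 τ) (v3 τ)) τ ∧
    HasDerivAt v3 (rhsV3 γ (sp τ) (sm τ) (s12 τ) (s13 τ) (s23 τ) (N τ) (lam τ) (A τ) (Om τ) (v1 τ) (v2 τ) (v3 τ)) τ) ∧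
    SatisfiesConstraints γ (sp τ) (sm τ) (s12 τ) (s13 τ) (s23 τ) (N τ) (lam τ) (A τ) (Om τ) (v1 τ) (v2 τ) (v3 τ)

theorem extremely_tilted_plane_wave_equilibrium (γ : ℝ) (h1 : 0 < γ) (h2 : γ < 2) :
    Vsq (-(2/3)) (Real.sqrt 5/3) 0 = 1 ∧
    SatisfiesConstraints γ (-(3/4)) (Real.sqrt 3/4) (0) (0) (0) (Real.sqrt 3/4) (0) (1/4) (0) (-(2/3)) (Real.sqrt 5/3) (0) ∧
    IsEquilibrium γ (-(3/4)) (Real.sqrt 3/4) (0) (0) (0) (Real.sqrt 3/4) (0) (1/4) (0) (-(2/3)) (Real.sqrt 5/3) (0) := by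
  have h3 : Real.sqrt 3 ^ 2 = 3 := Real.sq_sqrt (by norm_num)
  have h5 : Real.sqrt 5 ^ 2 = 5 := Real.sq_sqrt (by norm_num)
  have hγ : (2:ℝ) - γ ≠ 0 := by linarith
  have hV : Vsq (-(2/3)) (Real.sqrt 5/3) 0 = 1 := by
    simp only [Vsq]; nlinarith [h5]
  have hS : Sig2 (-(3/4)) (Real.sqrt 3/4) 0 0 0 = 3/4 := by
    simp only [Sig2]; nlinarith [h3]
  have hq : qdef γ (-(3/4)) (Real.sqrt 3/4) 0 0 0 0 (-(2/3)) (Real.sqrt 5/3) 0 = 3/2 := by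
    simp [qdef, hS]; norm_num
  have hP : Pdef (-(3/4)) (Real.sqrt 3/4) 0 0 0 (-(2/3)) (Real.sqrt 5/3) 0 = 2/3 := by
    simp only [Pdef]; nlinarith [h3, h5]
  have hT : Tdef γ (-(3/4)) (Real.sqrt 3/4) 0 0 0 (1/4) (-(2/3)) (Real.sqrt 5/3) 0 = 2/3 := by
    rw [Tdef, hV, hP]
    rw [show (1:ℝ) - (γ-1)*1 = 2 - γ by ring]
    field_simp
    ring
  refine ⟨hV, ⟨?_, ?_, ?_, ?_, ?_⟩, ?_, ?_, ?_, ?_, ?_, ?_, ?_, ?_, ?_, ?_, ?_, ?_⟩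
  · rw [hS]; nlinarith [h3]
  · simp; nlinarith [h3]
  · simp
  · simp
  · simp; nlinarith [h3]
  · rw [rhsSp, hq]; simp; nlinarith [h3]
  · rw [rhsSm, hq]; simp; nlinarith [h3]
  · rw [rhsS12]; simp
  · rw [rhsS13]; simp
  · rw [rhsS23, hq]; simp
  · rw [rhsN, hq]; ring
  · rw [rhsLam]; ring
  · rw [rhsA, hq]; ring
  · rw [rhsOm]; simp
  · rw [rhsV1, hT]; simp; nlinarith [h3, h5]
  · rw [rhsV2, hT]; linear_combination (-(5*Real.sqrt 5/36)) * h3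
  · rw [rhsV3, hT]; simp


end BianchiVI
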